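/- arXiv:2203.02775 — 4 statements merged into one kernel-verified Lean document; each statement's English description precedes it below -/
import Mathlib

section
/- Let Φ be a finite reduced crystallographic root system in a finite-dimensional real vector space V, with a fixed system of positive roots Φ⁺, negative roots Φ⁻ = −Φ⁺, and Weyl group W. Let ρ = (1/2)·∑_{α∈Φ⁺} α, and let the dot action of W on V be w·v = w(v+ρ) − ρ. If σ ∈ V is a sum of distinct negative roots, i.e. σ = −∑_{α∈S} α for some subset S ⊆ Φ⁺ (possibly empty), then for every w ∈ W the element w·σ is also a sum of distinct negative roots. -/
/-!
Let `A` be the set of positive roots. For `S ⊆ A`, the vector `σ + ρ` is half the sum of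
`(A \ S) ∪ -S`, a set containing exactly one of `α, -α` for every root `α`. The Weyl group
permutes the roots and commutes with negation, so it maps such a set to another one,
`(A \ T) ∪ -T`, and then `w (σ + ρ) - ρ = -∑_{α ∈ T} α`.
-/

open Set Pointwise

namespace Finset

variable {M : Type*} [AddCommGroup M] [DecidableEq M]

def IsSignChoice (A B : Finset M) : Prop :=
  Disjoint B (-B) ∧ B ∪ -B = A ∪ -A

lemma sum_sdiff_union_neg {A S : Finset M} (hA : Disjoint A (-A)) (hS : S ⊆ A) :
    ∑ x ∈ A \ S ∪ -S, x = ∑ x ∈ A, x - 2 • ∑ x ∈ S, x := by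
  have hdisj : Disjoint (A \ S) (-S) :=
    (hA.mono_left sdiff_subset).mono_right (neg_subset_neg hS)
  rw [sum_union hdisj, sum_sdiff_eq_sub hS, sum_neg_index, sum_neg_distrib, two_nsmul]
  abel

lemma isSignChoice_iff {A B : Finset M} (hA : Disjoint A (-A)) :
    IsSignChoice A B ↔ ∃ S ⊆ A, B = A \ S ∪ -S := by
  simp only [IsSignChoice, disjoint_left, Finset.ext_iff, mem_union, mem_neg'] at hA ⊢
  constructor
  · rintro ⟨hB, hBA⟩
    refine ⟨A \ B, sdiff_subset, fun x => ?_⟩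
    simp only [mem_sdiff]
    grind
  · rintro ⟨S, hS, hB⟩
    simp only [hB, neg_neg]
    grind

lemma IsSignChoice.image {F : Type*} [FunLike F M M] [AddMonoidHomClass F M M] {A B : Finset M}
    (hB : IsSignChoice A B) (w : F) (hw : Function.Injective w)
    (hmaps : ∀ x ∈ A ∪ -A, w x ∈ A ∪ -A) : IsSignChoice A (B.image w) := by
  have himg : (A ∪ -A).image w = A ∪ -A :=
    eq_of_subset_of_card_le (image_subset_iff.2 hmaps) (card_image_of_injective _ hw).ge
  refine ⟨?_, ?_⟩
  · rw [← image_neg, disjoint_image hw]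
    exact hB.1
  · rw [← image_neg, ← image_union, hB.2, himg]

theorem exists_map_sum_sub_two_nsmul_sum {F : Type*} [FunLike F M M] [AddMonoidHomClass F M M]
    {A S : Finset M} (hA : Disjoint A (-A)) (w : F) (hw : Function.Injective w)
    (hmaps : ∀ x ∈ A ∪ -A, w x ∈ A ∪ -A) (hS : S ⊆ A) :
    ∃ T ⊆ A, w (∑ x ∈ A, x - 2 • ∑ x ∈ S, x) = ∑ x ∈ A, x - 2 • ∑ x ∈ T, x := by
  obtain ⟨T, hT, hwB⟩ :=
    (isSignChoice_iff hA).1 (((isSignChoice_iff hA).2 ⟨S, hS, rfl⟩).image w hw hmaps)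
  refine ⟨T, hT, ?_⟩
  rw [← sum_sdiff_union_neg hA hS, ← sum_sdiff_union_neg hA hT, ← hwB, sum_image hw.injOn, map_sum]

end Finset

namespace RootPairing

variable {ι R M N : Type*} [CommRing R] [AddCommGroup M] [Module R M] [AddCommGroup N]
  [Module R N] (P : RootPairing ι R M N)

lemma mapsTo_root_of_mem_closure_reflection {w : M ≃ₗ[R] M}
    (hw : w ∈ Subgroup.closure (range P.reflection)) :
    MapsTo w (range P.root) (range P.root) := by
  induction hw using Subgroup.closure_induction'' with
  | mem _ hx | inv_mem _ hx =>
    obtain ⟨i, rfl⟩ := hx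
    exact P.mapsTo_reflection_root i
  | one => exact mapsTo_id _
  | mul _ _ _ _ hx hy => exact hx.comp hy

section PositiveSystem

variable [LinearOrder R] [IsStrictOrderedRing R] [DecidableEq M] {f : M →ₗ[R] R} {Pos : Finset ι}

lemma disjoint_map_root_neg (hPos : ∀ i, i ∈ Pos ↔ 0 < f (P.root i)) :
    Disjoint (Pos.map P.root) (-Pos.map P.root) := by
  simp only [Finset.disjoint_left, Finset.mem_neg', Finset.mem_map, forall_exists_index, and_imp]
  rintro _ i hi rfl ⟨j, hj, hji⟩
  have hi' := (hPos i).1 hi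
  have hj' := (hPos j).1 hj
  rw [hji, map_neg] at hj'
  linarith

lemma coe_map_root_union_neg (hf : ∀ i, f (P.root i) ≠ 0)
    (hPos : ∀ i, i ∈ Pos ↔ 0 < f (P.root i)) :
    (↑(Pos.map P.root ∪ -Pos.map P.root) : Set M) = range P.root := by
  ext x
  simp only [Finset.coe_union, Set.mem_union, Finset.mem_coe, Finset.mem_neg', Finset.mem_map]
  constructor
  · rintro (⟨i, -, rfl⟩ | ⟨i, -, hi⟩)
    · exact mem_range_self i
    · exact P.neg_mem_range_root_iff.1 (hi ▸ mem_range_self i)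
  · rintro ⟨i, rfl⟩
    rcases (hf i).lt_or_gt with hneg | hpos
    · refine Or.inr ⟨P.reflectionPerm i i, (hPos _).2 ?_, by simp⟩
      simpa using hneg
    · exact Or.inl ⟨i, (hPos i).2 hpos, rfl⟩

end PositiveSystem

end RootPairing

theorem dot_action_of_sum_of_distinct_negative_roots_general
    {ι V V' : Type*}
    [AddCommGroup V] [Module ℝ V]
    [AddCommGroup V'] [Module ℝ V']
    (P : RootPairing ι ℝ V V')
    -- `Pos` is a positive system: the roots on which a fixed regular linear
    -- functional `f` (nonvanishing on all roots) is positive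
    (f : V →ₗ[ℝ] ℝ) (hf : ∀ i, f (P.root i) ≠ 0)
    (Pos : Finset ι) (hPos : ∀ i, i ∈ Pos ↔ 0 < f (P.root i))
    -- ρ is the half-sum of the positive roots
    (ρ : V) (hρ : ρ = (2⁻¹ : ℝ) • ∑ i ∈ Pos, P.root i)
    -- σ is a sum of distinct negative roots
    (σ : V) (hσ : ∃ S ⊆ Pos, σ = -∑ i ∈ S, P.root i)
    -- w is an element of the Weyl group
    (w : V ≃ₗ[ℝ] V) (hw : w ∈ Subgroup.closure (Set.range P.reflection)) :
    -- then w·σ = w(σ+ρ) − ρ is a sum of distinct negative roots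
    ∃ S ⊆ Pos, w (σ + ρ) - ρ = -∑ i ∈ S, P.root i := by
  classical
  obtain ⟨S, hS, rfl⟩ := hσ
  have hA := P.disjoint_map_root_neg hPos
  have hmaps :
      ∀ x ∈ Pos.map P.root ∪ -Pos.map P.root, w x ∈ Pos.map P.root ∪ -Pos.map P.root := by
    have hw_root := P.mapsTo_root_of_mem_closure_reflection hw
    rwa [← P.coe_map_root_union_neg hf hPos] at hw_root
  obtain ⟨_, hTA, hwT⟩ :=
    Finset.exists_map_sum_sub_two_nsmul_sum hA w w.injective hmaps (Finset.map_subset_map.2 hS)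
  obtain ⟨T, hT, rfl⟩ := Finset.subset_map_iff.1 hTA
  refine ⟨T, hT, ?_⟩
  simp only [Finset.sum_map] at hwT
  have hσρ : -∑ i ∈ S, P.root i + ρ =
      (2⁻¹ : ℝ) • (∑ i ∈ Pos, P.root i - 2 • ∑ i ∈ S, P.root i) := by
    rw [hρ]
    module
  rw [hσρ, map_smul, hwT, hρ]
  module

theorem dot_action_of_sum_of_distinct_negative_roots
    {ι V V' : Type*} [Fintype ι]
    [AddCommGroup V] [Module ℝ V] [FiniteDimensional ℝ V]
    [AddCommGroup V'] [Module ℝ V']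
    (P : RootPairing ι ℝ V V') [P.IsRootSystem]
    (hcrys : P.IsCrystallographic)
    (hred : P.IsReduced)
    -- `Pos` is a positive system: the roots on which a fixed regular linear
    -- functional `f` (nonvanishing on all roots) is positive
    (f : V →ₗ[ℝ] ℝ) (hf : ∀ i, f (P.root i) ≠ 0)
    (Pos : Finset ι) (hPos : ∀ i, i ∈ Pos ↔ 0 < f (P.root i))
    -- ρ is the half-sum of the positive roots
    (ρ : V) (hρ : ρ = (2⁻¹ : ℝ) • ∑ i ∈ Pos, P.root i)
    -- σ is a sum of distinct negative roots
    (σ : V) (hσ : ∃ S ⊆ Pos, σ = -∑ i ∈ S, P.root i)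
    -- w is an element of the Weyl group
    (w : V ≃ₗ[ℝ] V) (hw : w ∈ Subgroup.closure (Set.range P.reflection)) :
    -- then w·σ = w(σ+ρ) − ρ is a sum of distinct negative roots
    ∃ S ⊆ Pos, w (σ + ρ) - ρ = -∑ i ∈ S, P.root i :=
  dot_action_of_sum_of_distinct_negative_roots_general P f hf Pos hPos ρ hρ σ hσ w hw
end

section
/- Fix n ≥ 1 and work in ℤⁿ with standard basis ε₁,…,ε_n, positive roots ε_i − ε_j for 1 ≤ i < j ≤ n, Weyl group W = S_n acting by permuting coordinates, ρ = (n−1, n−2, …, 1, 0), and dot action w·λ = w(λ+ρ) − ρ. Let N be the set of all sums of distinct negative roots, i.e. all σ = −∑_{(i,j)∈S} (ε_i − ε_j) for sets S of pairs with 1 ≤ i < j ≤ n (including σ = 0 for S = ∅). Then for every permutation w ∈ S_n and every σ ∈ N, the element w·σ belongs to N. -/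
/-!
STATEMENT 2: Fix n ≥ 1 and work in ℤⁿ with standard basis ε₁,…,ε_n, positive
roots ε_i − ε_j for 1 ≤ i < j ≤ n, Weyl group W = S_n acting by permuting
coordinates, ρ = (n−1, n−2, …, 1, 0), and dot action w·λ = w(λ+ρ) − ρ.  Let N
be the set of all sums of distinct negative roots, i.e. all
σ = −∑_{(i,j)∈S} (ε_i − ε_j) for sets S of pairs with 1 ≤ i < j ≤ n (including
σ = 0 for S = ∅).  Then for every permutation w ∈ S_n and every σ ∈ N, the
element w·σ belongs to N.
-/

/-- The standard basis vector ε_i of ℤⁿ. -/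
def eps {n : ℕ} (i : Fin n) : Fin n → ℤ := Pi.single i 1

/-- The action of S_n on ℤⁿ permuting coordinates: (w(λ))_i = λ_{w⁻¹(i)}. -/
def permAct {n : ℕ} (w : Equiv.Perm (Fin n)) (l : Fin n → ℤ) : Fin n → ℤ :=
  fun i => l (w⁻¹ i)

/-- ρ = (n−1, n−2, …, 1, 0). -/
def rho (n : ℕ) : Fin n → ℤ := fun i => (n : ℤ) - 1 - (i : ℤ)

/-- The dot action w·λ = w(λ+ρ) − ρ of S_n on ℤⁿ. -/
def dotAct {n : ℕ} (w : Equiv.Perm (Fin n)) (l : Fin n → ℤ) : Fin n → ℤ :=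
  permAct w (l + rho n) - rho n

/-- The set N of all sums of distinct negative roots:
all σ = −∑_{(i,j)∈S} (ε_i − ε_j) where S is a (possibly empty) set of pairs
(i,j) with i < j. -/
def sumDistinctNegRoots (n : ℕ) : Set (Fin n → ℤ) :=
  {σ | ∃ S : Finset (Fin n × Fin n), (∀ p ∈ S, p.1 < p.2) ∧
    σ = -∑ p ∈ S, (eps p.1 - eps p.2)}

/-!
`S_n` is generated as a monoid by the simple transpositions `s = (c c+1)`, and the `w` whose dot
action maps `N` into itself form a submonoid, so only `s` needs checking. With `α = ε_c − ε_{c+1}`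
one has `sρ − ρ = −α` and `sα = −α`, so `s·σ = s(σ) − α`, and `s` permutes the positive roots other
than `α`. Writing `σ = −∑_{β ∈ S} β`: if `α ∉ S` then `s·σ = −∑_{β ∈ sS ∪ {α}} β`; if `α ∈ S` then
`s·σ = s(σ + α) = −∑_{β ∈ s(S ∖ {α})} β`.
-/

open Equiv Finset

section

variable {n : ℕ}

theorem permAct_eq_funLeft (w : Perm (Fin n)) :
    permAct w = LinearMap.funLeft ℤ ℤ ⇑w⁻¹ := rfl

theorem permAct_eps (w : Perm (Fin n)) (j : Fin n) : permAct w (eps j) = eps (w j) := by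
  funext i
  simp [permAct, eps, Pi.single_apply, symm_apply_eq]

theorem permAct_eps_sub_eps (w : Perm (Fin n)) (a b : Fin n) :
    permAct w (eps a - eps b) = eps (w a) - eps (w b) := by
  rw [permAct_eq_funLeft, map_sub, ← permAct_eq_funLeft, permAct_eps, permAct_eps]

theorem permAct_neg_sum_roots (w : Perm (Fin n)) (S : Finset (Fin n × Fin n)) :
    permAct w (-∑ p ∈ S, (eps p.1 - eps p.2)) =
      -∑ p ∈ S.map (w.prodCongr w).toEmbedding, (eps p.1 - eps p.2) := by
  rw [permAct_eq_funLeft, map_neg, map_sum, sum_map]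
  exact congrArg _ (sum_congr rfl fun p _ => permAct_eps_sub_eps w p.1 p.2)

theorem dotAct_eq_permAct_add (w : Perm (Fin n)) (l : Fin n → ℤ) :
    dotAct w l = permAct w l + (permAct w (rho n) - rho n) := by
  rw [dotAct, permAct_eq_funLeft, map_add]
  abel

theorem dotAct_one (l : Fin n → ℤ) : dotAct 1 l = l := by
  simp [dotAct_eq_permAct_add, permAct_eq_funLeft]

theorem dotAct_mul (v w : Perm (Fin n)) (l : Fin n → ℤ) :
    dotAct (v * w) l = dotAct v (dotAct w l) := by
  simp only [dotAct, sub_add_cancel]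
  rfl

def dotActMapsToSubmonoid (A : Set (Fin n → ℤ)) : Submonoid (Perm (Fin n)) where
  carrier := {w | Set.MapsTo (dotAct w) A A}
  one_mem' l hl := by rwa [dotAct_one]
  mul_mem' hv hw l hl := by
    rw [dotAct_mul]
    exact hv (hw hl)

end

section

variable {m : ℕ}

theorem permAct_swap_rho_sub_rho (i : Fin m) :
    permAct (swap i.castSucc i.succ) (rho (m + 1)) - rho (m + 1) =
      -(eps i.castSucc - eps i.succ) := by
  have hne := (Fin.castSucc_lt_succ (i := i)).ne
  funext j
  rcases eq_or_ne j i.castSucc with rfl | hj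
  · simp [permAct, rho, eps, hne]
  rcases eq_or_ne j i.succ with rfl | hj'
  · simp [permAct, rho, eps, hne.symm]
  · simp [permAct, rho, eps, swap_apply_of_ne_of_ne hj hj', hj, hj']

theorem swap_castSucc_succ_lt_swap {i : Fin m} {a b : Fin (m + 1)} (hab : a < b)
    (hne : (a, b) ≠ (i.castSucc, i.succ)) :
    swap i.castSucc i.succ a < swap i.castSucc i.succ b := by
  rw [Fin.lt_def] at hab ⊢
  simp only [swap_apply_def]
  split_ifs <;> simp_all [Fin.ext_iff] <;> omega

theorem forall_lt_of_mem_map_swap {i : Fin m} {S : Finset (Fin (m + 1) × Fin (m + 1))}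
    (hS : ∀ p ∈ S, p.1 < p.2) (hmem : (i.castSucc, i.succ) ∉ S) :
    ∀ p ∈ S.map ((swap i.castSucc i.succ).prodCongr (swap i.castSucc i.succ)).toEmbedding,
      p.1 < p.2 := by
  simp only [mem_map, Equiv.coe_toEmbedding, forall_exists_index, and_imp]
  rintro _ p hp rfl
  exact swap_castSucc_succ_lt_swap (hS p hp) (ne_of_mem_of_not_mem hp hmem)

theorem notMem_map_swap {i : Fin m} {S : Finset (Fin (m + 1) × Fin (m + 1))}
    (hS : ∀ p ∈ S, p.1 < p.2) :
    (i.castSucc, i.succ) ∉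
      S.map ((swap i.castSucc i.succ).prodCongr (swap i.castSucc i.succ)).toEmbedding := by
  rw [mem_map_equiv]
  intro h
  have := hS _ h
  simp only [prodCongr_symm, symm_swap, prodCongr_apply, Prod.map, swap_apply_left,
    swap_apply_right] at this
  exact lt_asymm this Fin.castSucc_lt_succ

theorem dotAct_swap_castSucc_succ_mem (i : Fin m) {σ : Fin (m + 1) → ℤ}
    (hσ : σ ∈ sumDistinctNegRoots (m + 1)) :
    dotAct (swap i.castSucc i.succ) σ ∈ sumDistinctNegRoots (m + 1) := by
  obtain ⟨S, hS, rfl⟩ := hσ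
  set s := swap i.castSucc i.succ
  set α := eps i.castSucc - eps i.succ
  have hdot (l : Fin (m + 1) → ℤ) : dotAct s l = permAct s l - α := by
    rw [dotAct_eq_permAct_add, permAct_swap_rho_sub_rho, ← sub_eq_add_neg]
  by_cases hmem : (i.castSucc, i.succ) ∈ S
  · have hS' : ∀ p ∈ S.erase (i.castSucc, i.succ), p.1 < p.2 :=
      fun p hp => hS p (mem_of_mem_erase hp)
    refine ⟨_, forall_lt_of_mem_map_swap hS' (notMem_erase _ _), ?_⟩
    have hsα : permAct s α = -α := by
      rw [permAct_eps_sub_eps, swap_apply_left, swap_apply_right, neg_sub]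
    rw [← permAct_neg_sum_roots, ← add_sum_erase S _ hmem, neg_add_rev, ← sub_eq_add_neg, hdot]
    change permAct s _ - permAct s α - α = _
    rw [hsα, sub_neg_eq_add, add_sub_cancel_right]
  · refine ⟨insert (i.castSucc, i.succ) (S.map (s.prodCongr s).toEmbedding), ?_, ?_⟩
    · exact forall_mem_insert _ _ _ |>.2 ⟨Fin.castSucc_lt_succ, forall_lt_of_mem_map_swap hS hmem⟩
    · rw [sum_insert (notMem_map_swap hS), neg_add', hdot, permAct_neg_sum_roots]
      simp only [α, s]
      abel

end

theorem dot_act_mem_sumDistinctNegRoots_general (n : ℕ)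
    (w : Equiv.Perm (Fin n)) (σ : Fin n → ℤ)
    (hσ : σ ∈ sumDistinctNegRoots n) :
    dotAct w σ ∈ sumDistinctNegRoots n := by
  cases n with
  | zero => rwa [Subsingleton.elim w 1, dotAct_one]
  | succ m =>
    have hgen : Submonoid.closure (Set.range fun i : Fin m => swap i.castSucc i.succ) ≤
        dotActMapsToSubmonoid (sumDistinctNegRoots (m + 1)) :=
      Submonoid.closure_le.2 <| Set.range_subset_iff.2 fun i _ => dotAct_swap_castSucc_succ_mem i
    exact hgen (Perm.mclosure_swap_castSucc_succ m ▸ Submonoid.mem_top w) hσ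

theorem dot_act_mem_sumDistinctNegRoots (n : ℕ) (hn : 1 ≤ n)
    (w : Equiv.Perm (Fin n)) (σ : Fin n → ℤ)
    (hσ : σ ∈ sumDistinctNegRoots n) :
    dotAct w σ ∈ sumDistinctNegRoots n :=
  dot_act_mem_sumDistinctNegRoots_general n w σ hσ
end

section
/- Fix n ≥ 1 and work in ℤⁿ with Weyl group W = S_n permuting coordinates, ρ = (n−1, n−2, …, 1, 0), dot action w·λ = w(λ+ρ) − ρ, N the set of sums of distinct negative roots −∑_{(i,j)∈S}(ε_i − ε_j) (i < j), and C̄_ℤ = {μ ∈ ℤⁿ : μ_i − μ_{i+1} ≥ −1 for all 1 ≤ i ≤ n−1}. For w ∈ S_n set Ω(w) = {λ ∈ ℤⁿ : λ + w⁻¹(σ) ∈ C̄_ℤ for all σ ∈ N}. Then for every w ∈ S_n one has w·Ω(w) = w(Ω(1)), where the left side uses the dot action and the right side the ordinary permutation action. Consequently Ω := ⋃_{w∈S_n} w·Ω(w) = ⋃_{w∈S_n} w(Ω(1)). -/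
/-- C̄_ℤ = {μ ∈ ℤⁿ : μ_i − μ_{i+1} ≥ −1 for all 1 ≤ i ≤ n−1}. -/
def Cbar (n : ℕ) : Set (Fin n → ℤ) :=
  {μ | ∀ (i : Fin n) (h : (i : ℕ) + 1 < n), μ i - μ ⟨(i : ℕ) + 1, h⟩ ≥ -1}

/-- Ω(w) = {λ ∈ ℤⁿ : λ + w⁻¹(σ) ∈ C̄_ℤ for all σ ∈ N}. -/
def Omega (n : ℕ) (w : Equiv.Perm (Fin n)) : Set (Fin n → ℤ) :=
  {l | ∀ σ ∈ sumDistinctNegRoots n, l + permAct w⁻¹ σ ∈ Cbar n}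

/-!
For `σ ∈ N` the coordinate `σ k` lies between `-(n - 1 - k)` and `k`, and for `a ≠ b` the
minimum at `a` and the maximum at `b` are attained by one and the same `σ`. Hence `Ω(w)` is
cut out by `λ i - λ (i+1) ≥ -1 + ρ (w i) - ρ (w (i+1)) + (n - 1)`, that is
`Ω(w) = w⁻¹ρ + D` with `D = {μ | μ i - μ (i+1) ≥ n - 2}` independent of `w`.
Finally `w · (w⁻¹ρ + d) = w (ρ + d)`, so `w · Ω(w) = w (ρ + D) = w Ω(1)`.
-/

open Finset Pointwise

section SumDistinctNegRoots

variable {n : ℕ} {S : Finset (Fin n × Fin n)}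

lemma neg_sum_eps_sub_apply (k : Fin n) :
    (-∑ p ∈ S, (eps p.1 - eps p.2)) k =
      (#{p ∈ S | k = p.2} : ℤ) - #{p ∈ S | k = p.1} := by
  simp only [Pi.neg_apply, Finset.sum_apply, Pi.sub_apply, eps, Pi.single_apply,
    Finset.sum_sub_distrib, Finset.sum_boole]
  ring

lemma card_filter_eq_fst_le (hS : ∀ p ∈ S, p.1 < p.2) (k : Fin n) :
    #{p ∈ S | k = p.1} ≤ n - 1 - k := by
  calc #{p ∈ S | k = p.1} ≤ #({k} ×ˢ Ioi k) :=
        card_le_card fun p hp => by grind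
    _ = n - 1 - k := by simp

lemma card_filter_eq_snd_le (hS : ∀ p ∈ S, p.1 < p.2) (k : Fin n) :
    #{p ∈ S | k = p.2} ≤ k := by
  calc #{p ∈ S | k = p.2} ≤ #(Iio k ×ˢ {k}) :=
        card_le_card fun p hp => by grind
    _ = k := by simp

lemma neg_rho_le_apply_of_mem_sumDistinctNegRoots {σ : Fin n → ℤ}
    (hσ : σ ∈ sumDistinctNegRoots n) (k : Fin n) : -rho n k ≤ σ k := by
  obtain ⟨S, hS, rfl⟩ := hσ
  have := card_filter_eq_fst_le hS k
  rw [neg_sum_eps_sub_apply, rho]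
  omega

lemma apply_le_of_mem_sumDistinctNegRoots {σ : Fin n → ℤ}
    (hσ : σ ∈ sumDistinctNegRoots n) (k : Fin n) : σ k ≤ k := by
  obtain ⟨S, hS, rfl⟩ := hσ
  have := card_filter_eq_snd_le hS k
  rw [neg_sum_eps_sub_apply]
  omega

/-- Take every positive root with `a` as its first index or `b` as its second. -/
lemma exists_mem_sumDistinctNegRoots_apply_eq {a b : Fin n} (hab : a ≠ b) :
    ∃ σ ∈ sumDistinctNegRoots n, σ a = -rho n a ∧ σ b = b := by
  set S : Finset (Fin n × Fin n) := {p | p.1 < p.2 ∧ (p.1 = a ∨ p.2 = b)}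
  refine ⟨_, ⟨S, fun p hp => by grind, rfl⟩, ?_, ?_⟩
  · have h1 : {p ∈ S | a = p.1} = {a} ×ˢ Ioi a := by
      ext p; grind
    have h2 : {p ∈ S | a = p.2} = ∅ := by
      ext p; grind
    rw [neg_sum_eps_sub_apply, h1, h2]
    simp only [card_product, card_singleton, Fin.card_Ioi, one_mul, card_empty, rho]
    omega
  · have h1 : {p ∈ S | b = p.2} = Iio b ×ˢ {b} := by
      ext p; grind
    have h2 : {p ∈ S | b = p.1} = ∅ := by
      ext p; grind
    rw [neg_sum_eps_sub_apply, h1, h2]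
    simp

end SumDistinctNegRoots

def chamberOfDepth (n : ℕ) (c : ℤ) : Set (Fin n → ℤ) :=
  {μ | ∀ (i : Fin n) (h : (i : ℕ) + 1 < n), c ≤ μ i - μ ⟨(i : ℕ) + 1, h⟩}

lemma permAct_one {n : ℕ} (l : Fin n → ℤ) : permAct 1 l = l := rfl

lemma Omega_eq_vadd {n : ℕ} (w : Equiv.Perm (Fin n)) :
    Omega n w = permAct w⁻¹ (rho n) +ᵥ chamberOfDepth n (n - 2) := by
  ext l
  rw [Set.mem_vadd_set_iff_neg_vadd_mem]
  simp only [Omega, chamberOfDepth, Cbar, Set.mem_ofPred_eq, vadd_eq_add, Pi.add_apply,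
    Pi.neg_apply, permAct, inv_inv, rho]
  constructor
  · intro hl i h
    have hne : w i ≠ w ⟨i + 1, h⟩ := w.injective.ne (Fin.ne_of_val_ne (by simp))
    obtain ⟨σ, hσ, ha, hb⟩ := exists_mem_sumDistinctNegRoots_apply_eq hne
    have := hl σ hσ i h
    simp only [rho] at ha
    omega
  · intro hl σ hσ i h
    have ha := neg_rho_le_apply_of_mem_sumDistinctNegRoots hσ (w i)
    have hb := apply_le_of_mem_sumDistinctNegRoots hσ (w ⟨i + 1, h⟩)
    have := hl i h
    simp only [rho] at ha
    omega

lemma dotAct_permAct_inv_rho_add {n : ℕ} (w : Equiv.Perm (Fin n)) (d : Fin n → ℤ) :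
    dotAct w (permAct w⁻¹ (rho n) + d) = permAct w (rho n + d) := by
  funext k
  simp only [dotAct, permAct, Pi.add_apply, Pi.sub_apply, inv_inv, Equiv.Perm.coe_inv,
    Equiv.apply_symm_apply]
  ring

theorem dot_omega_eq_perm_omega_one_general (n : ℕ) :
    (∀ w : Equiv.Perm (Fin n), dotAct w '' Omega n w = permAct w '' Omega n 1) ∧
    (⋃ w : Equiv.Perm (Fin n), dotAct w '' Omega n w) =
      ⋃ w : Equiv.Perm (Fin n), permAct w '' Omega n 1 := by
  have key (w : Equiv.Perm (Fin n)) : dotAct w '' Omega n w = permAct w '' Omega n 1 := by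
    rw [Omega_eq_vadd, Omega_eq_vadd, inv_one, permAct_one, ← Set.image_vadd,
      ← Set.image_vadd, Set.image_image, Set.image_image]
    exact Set.image_congr fun d _ => dotAct_permAct_inv_rho_add w d
  exact ⟨key, Set.iUnion_congr key⟩

theorem dot_omega_eq_perm_omega_one (n : ℕ) (hn : 1 ≤ n) :
    (∀ w : Equiv.Perm (Fin n), dotAct w '' Omega n w = permAct w '' Omega n 1) ∧
    (⋃ w : Equiv.Perm (Fin n), dotAct w '' Omega n w) =
      ⋃ w : Equiv.Perm (Fin n), permAct w '' Omega n 1 :=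
  dot_omega_eq_perm_omega_one_general n
end

section
/- Let Φ be a finite reduced crystallographic root system in a finite-dimensional real vector space V, with positive system Φ⁺, Weyl group W, ρ = (1/2)·∑_{α∈Φ⁺} α, and dot action w·v = w(v+ρ) − ρ. Let N ⊆ V be the set of all sums of distinct negative roots, set C̄ = {λ ∈ V : ⟨λ+ρ, α∨⟩ ≥ 0 for all α ∈ Φ⁺}, and for w ∈ W set Ω(w) = {λ ∈ V : λ + w⁻¹(σ) ∈ C̄ for all σ ∈ N}. Then for every w ∈ W one has w·Ω(w) = w(Ω(1)), where the left side uses the dot action and the right side the ordinary linear action of w. -/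
/-!
For a set `A` of roots containing exactly one of `±α` for every root `α`, put
`ρ_A = ½ ∑_{α ∈ A} α`. Comparing `A` with `Φ⁺` gives `ρ_A - ρ = -∑_{α ∈ Φ⁺ ∖ A} α`, and every
`σ ∈ N` arises in this way, so `N + ρ` is the set of all `ρ_A`. The Weyl group permutes the roots,
hence these sets `A`, so `N + ρ` is `W`-stable: the dot action of `W` preserves `N`. Then
`λ + w⁻¹σ = (λ + ρ - w⁻¹ρ) + w⁻¹·σ` shows `Ω(w) = Ω(1) - ρ + w⁻¹ρ`, which the dot action of `w`
carries onto `w(Ω(1))`.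
-/

open Set

namespace RootPairing

section CommRing

variable {ι R V V' : Type*} [CommRing R] [AddCommGroup V] [Module R V]
  [AddCommGroup V'] [Module R V'] (P : RootPairing ι R V V')

@[simp]
lemma root_reflectionPerm_self (j : ι) : P.root (P.reflectionPerm j j) = -P.root j := by
  rw [root_reflectionPerm, reflection_apply_self]

@[simp]
lemma reflectionPerm_self_self (j : ι) :
    P.reflectionPerm (P.reflectionPerm j j) (P.reflectionPerm j j) = j :=
  letI := P.indexNeg; neg_neg j

def IsHalfSystem (A : Finset ι) : Prop :=
  ∀ j, P.reflectionPerm j j ∈ A ↔ j ∉ A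

variable {P}

lemma mem_image_reflectionPerm_self [DecidableEq ι] {T : Finset ι} {j : ι} :
    j ∈ T.image (fun k => P.reflectionPerm k k) ↔ P.reflectionPerm j j ∈ T := by
  constructor
  · intro h
    obtain ⟨k, hk, rfl⟩ := Finset.mem_image.1 h
    simpa using hk
  · exact fun h => Finset.mem_image.2 ⟨_, h, by simp⟩

lemma sum_image_reflectionPerm_self [DecidableEq ι] (T : Finset ι) :
    ∑ j ∈ T.image (fun j => P.reflectionPerm j j), P.root j = -∑ j ∈ T, P.root j := by
  rw [Finset.sum_image fun i _ j _ h => by simpa using congrArg (fun k => P.reflectionPerm k k) h]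
  simp [Finset.sum_neg_distrib]

namespace IsHalfSystem

lemma map {A : Finset ι} (hA : P.IsHalfSystem A) {u : V ≃ₗ[R] V} {g : Equiv.Perm ι}
    (hg : ∀ i, P.root (g i) = u (P.root i)) : P.IsHalfSystem (A.map g.toEmbedding) := by
  have hneg : ∀ j, g (P.reflectionPerm j j) = P.reflectionPerm (g j) (g j) :=
    fun j => P.root.injective (by simp only [root_reflectionPerm_self, hg, map_neg])
  intro j
  obtain ⟨k, rfl⟩ := g.surjective j
  simpa [← hneg] using hA k

variable [DecidableEq ι] {A B : Finset ι}

lemma sdiff_eq_image (hA : P.IsHalfSystem A) (hB : P.IsHalfSystem B) :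
    A \ B = (B \ A).image (fun j => P.reflectionPerm j j) := by
  ext j
  have := hA j
  have := hB j
  simp only [Finset.mem_sdiff, mem_image_reflectionPerm_self]
  tauto

lemma sum_root_eq (hA : P.IsHalfSystem A) (hB : P.IsHalfSystem B) :
    ∑ j ∈ A, P.root j = ∑ j ∈ B, P.root j - 2 • ∑ j ∈ B \ A, P.root j := by
  rw [← Finset.sum_inter_add_sum_sdiff A B, ← Finset.sum_inter_add_sum_sdiff B A,
    Finset.inter_comm, hA.sdiff_eq_image hB, sum_image_reflectionPerm_self]
  abel

lemma exists_sdiff_eq (hB : P.IsHalfSystem B) {S : Finset ι} (hS : S ⊆ B) :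
    ∃ A, P.IsHalfSystem A ∧ B \ A = S := by
  have hS' : ∀ j ∈ S, P.reflectionPerm j j ∉ S := fun j hj h => (hB j).1 (hS h) (hS hj)
  refine ⟨B \ S ∪ S.image (fun j => P.reflectionPerm j j), fun j => ?_, ?_⟩
  · have := hB j
    have := @hS j
    have := hS' j
    have := hS' (P.reflectionPerm j j)
    simp only [Finset.mem_union, Finset.mem_sdiff, mem_image_reflectionPerm_self,
      reflectionPerm_self_self] at *
    tauto
  · ext j
    have := hB j
    have := @hS j
    have := hS' (P.reflectionPerm j j)
    simp only [Finset.mem_union, Finset.mem_sdiff, mem_image_reflectionPerm_self,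
      reflectionPerm_self_self] at *
    tauto

end IsHalfSystem

lemma exists_perm_root_eq_of_mem_closure {u : V ≃ₗ[R] V}
    (hu : u ∈ Subgroup.closure (range P.reflection)) :
    ∃ g : Equiv.Perm ι, ∀ i, P.root (g i) = u (P.root i) := by
  induction hu using Subgroup.closure_induction with
  | mem x hx =>
    obtain ⟨k, rfl⟩ := hx
    exact ⟨P.reflectionPerm k, P.root_reflectionPerm k⟩
  | one => exact ⟨1, fun _ => rfl⟩
  | mul x y _ _ hx hy =>
    obtain ⟨g, hg⟩ := hx
    obtain ⟨h, hh⟩ := hy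
    exact ⟨h.trans g, fun i => by simp [hg, hh]⟩
  | inv x _ hx =>
    obtain ⟨g, hg⟩ := hx
    exact ⟨g⁻¹, fun i => x.injective (by simp [← hg])⟩

end CommRing

section Field

variable {ι R V V' : Type*} [Field R] [CharZero R] [AddCommGroup V] [Module R V]
  [AddCommGroup V'] [Module R V']

def negSums (P : RootPairing ι R V V') (B : Finset ι) : Set V :=
  {σ | ∃ S ⊆ B, σ = -∑ i ∈ S, P.root i}

variable {P : RootPairing ι R V V'}

lemma weyl_dot_mem_negSums [DecidableEq ι] {B : Finset ι} (hB : P.IsHalfSystem B)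
    {u : V ≃ₗ[R] V} (hu : u ∈ Subgroup.closure (range P.reflection)) {σ : V}
    (hσ : σ ∈ P.negSums B) :
    u (σ + (2⁻¹ : R) • ∑ i ∈ B, P.root i) - (2⁻¹ : R) • ∑ i ∈ B, P.root i ∈ P.negSums B := by
  obtain ⟨S, hSB, rfl⟩ := hσ
  obtain ⟨A, hA, rfl⟩ := hB.exists_sdiff_eq hSB
  obtain ⟨g, hg⟩ := exists_perm_root_eq_of_mem_closure hu
  refine ⟨B \ A.map g.toEmbedding, Finset.sdiff_subset, ?_⟩
  have hshift : -∑ i ∈ B \ A, P.root i + (2⁻¹ : R) • ∑ i ∈ B, P.root i =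
      (2⁻¹ : R) • ∑ i ∈ A, P.root i := by
    rw [hA.sum_root_eq hB]
    module
  have hu_sum : u (∑ i ∈ A, P.root i) = ∑ i ∈ A.map g.toEmbedding, P.root i := by
    simp [map_sum, hg]
  rw [hshift, map_smul, hu_sum, (hA.map hg).sum_root_eq hB]
  module

end Field

lemma isHalfSystem_of_forall_mem_iff {ι R V V' : Type*} [Field R] [LinearOrder R]
    [IsStrictOrderedRing R] [AddCommGroup V] [Module R V] [AddCommGroup V'] [Module R V']
    {P : RootPairing ι R V V'} {f : V →ₗ[R] R} (hf : ∀ i, f (P.root i) ≠ 0) {B : Finset ι}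
    (hB : ∀ i, i ∈ B ↔ 0 < f (P.root i)) :
    P.IsHalfSystem B := by
  intro j
  rw [hB, hB, root_reflectionPerm_self, map_neg, neg_pos, not_lt]
  exact ⟨le_of_lt, fun h => h.lt_of_ne (hf j)⟩

end RootPairing

section DotAction

variable {R V : Type*} [CommRing R] [AddCommGroup V] [Module R V] {w : V ≃ₗ[R] V} {ρ : V}
  {N C : Set V}

lemma forall_add_inv_apply_mem_iff (hN : ∀ σ ∈ N, w (σ + ρ) - ρ ∈ N)
    (hN' : ∀ σ ∈ N, w⁻¹ (σ + ρ) - ρ ∈ N) (l : V) :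
    (∀ σ ∈ N, l + w⁻¹ σ ∈ C) ↔ ∀ σ ∈ N, l + (ρ - w⁻¹ ρ) + σ ∈ C := by
  have key : ∀ σ, l + w⁻¹ σ = l + (ρ - w⁻¹ ρ) + (w⁻¹ (σ + ρ) - ρ) := fun σ => by
    rw [map_add]; abel
  constructor
  · intro h σ hσ
    convert h _ (hN σ hσ) using 1
    rw [key, sub_add_cancel, LinearEquiv.coe_inv, LinearEquiv.symm_apply_apply,
      add_sub_cancel_right]
  · intro h σ hσ
    exact key σ ▸ h _ (hN' σ hσ)

lemma image_dot_eq_image (hN : ∀ σ ∈ N, w (σ + ρ) - ρ ∈ N)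
    (hN' : ∀ σ ∈ N, w⁻¹ (σ + ρ) - ρ ∈ N) :
    (fun v => w (v + ρ) - ρ) '' {l | ∀ σ ∈ N, l + w⁻¹ σ ∈ C} =
      w '' {l | ∀ σ ∈ N, l + σ ∈ C} := by
  have hdot : (fun v => w (v + ρ) - ρ) = w ∘ (· + (ρ - w⁻¹ ρ)) := by
    ext v
    simp only [Function.comp_apply, map_add, map_sub, LinearEquiv.coe_inv,
      LinearEquiv.apply_symm_apply]
    abel
  rw [hdot, Set.image_comp, Set.image_add_right]
  simp only [Set.preimage_ofPred_eq, forall_add_inv_apply_mem_iff hN hN', neg_add_cancel_right]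

end DotAction

theorem dot_omega_eq_weyl_translate_omega_one_general
    {ι V V' : Type*}
    [AddCommGroup V] [Module ℝ V]
    [AddCommGroup V'] [Module ℝ V']
    (P : RootPairing ι ℝ V V')
    -- `Pos` is a positive system: the roots on which a fixed regular linear
    -- functional `f` (nonvanishing on all roots) is positive
    (f : V →ₗ[ℝ] ℝ) (hf : ∀ i, f (P.root i) ≠ 0)
    (Pos : Finset ι) (hPos : ∀ i, i ∈ Pos ↔ 0 < f (P.root i))
    -- ρ is the half-sum of the positive roots
    (ρ : V) (hρ : ρ = (2⁻¹ : ℝ) • ∑ i ∈ Pos, P.root i)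
    -- N is the set of sums of distinct negative roots
    (N : Set V) (hN : N = {σ : V | ∃ S ⊆ Pos, σ = -∑ i ∈ S, P.root i})
    -- C̄ = {λ : ⟨λ+ρ, α∨⟩ ≥ 0 for all α ∈ Φ⁺}
    (C : Set V)
    -- Ω(u) = {λ : λ + u⁻¹(σ) ∈ C̄ for all σ ∈ N}
    (Ω : (V ≃ₗ[ℝ] V) → Set V)
    (hΩ : ∀ u : V ≃ₗ[ℝ] V, Ω u = {l : V | ∀ σ ∈ N, l + u⁻¹ σ ∈ C})
    -- w is an element of the Weyl group
    (w : V ≃ₗ[ℝ] V) (hw : w ∈ Subgroup.closure (Set.range P.reflection)) :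
    -- then w·Ω(w) = w(Ω(1))
    (fun v => w (v + ρ) - ρ) '' Ω w = (fun v => w v) '' Ω 1 := by
  classical
  subst hρ hN
  have hdot : ∀ u ∈ Subgroup.closure (Set.range P.reflection), ∀ σ ∈ P.negSums Pos,
      u (σ + (2⁻¹ : ℝ) • ∑ i ∈ Pos, P.root i) - (2⁻¹ : ℝ) • ∑ i ∈ Pos, P.root i ∈ P.negSums Pos :=
    fun u hu σ hσ =>
      RootPairing.weyl_dot_mem_negSums (RootPairing.isHalfSystem_of_forall_mem_iff hf hPos) hu hσ
  rw [hΩ, hΩ, inv_one]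
  exact image_dot_eq_image (hdot w hw) (hdot _ (inv_mem hw))

theorem dot_omega_eq_weyl_translate_omega_one
    {ι V V' : Type*} [Fintype ι]
    [AddCommGroup V] [Module ℝ V] [FiniteDimensional ℝ V]
    [AddCommGroup V'] [Module ℝ V']
    (P : RootPairing ι ℝ V V') (hspan : Submodule.span ℝ (Set.range P.root) = ⊤)
    (hcrys : P.IsCrystallographic)
    (hred : P.IsReduced)
    -- `Pos` is a positive system: the roots on which a fixed regular linear
    -- functional `f` (nonvanishing on all roots) is positive
    (f : V →ₗ[ℝ] ℝ) (hf : ∀ i, f (P.root i) ≠ 0)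
    (Pos : Finset ι) (hPos : ∀ i, i ∈ Pos ↔ 0 < f (P.root i))
    -- ρ is the half-sum of the positive roots
    (ρ : V) (hρ : ρ = (2⁻¹ : ℝ) • ∑ i ∈ Pos, P.root i)
    -- N is the set of sums of distinct negative roots
    (N : Set V) (hN : N = {σ : V | ∃ S ⊆ Pos, σ = -∑ i ∈ S, P.root i})
    -- C̄ = {λ : ⟨λ+ρ, α∨⟩ ≥ 0 for all α ∈ Φ⁺}
    (C : Set V) (hC : C = {l : V | ∀ i ∈ Pos, 0 ≤ P.coroot' i (l + ρ)})
    -- Ω(u) = {λ : λ + u⁻¹(σ) ∈ C̄ for all σ ∈ N}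
    (Ω : (V ≃ₗ[ℝ] V) → Set V)
    (hΩ : ∀ u : V ≃ₗ[ℝ] V, Ω u = {l : V | ∀ σ ∈ N, l + u⁻¹ σ ∈ C})
    -- w is an element of the Weyl group
    (w : V ≃ₗ[ℝ] V) (hw : w ∈ Subgroup.closure (Set.range P.reflection)) :
    -- then w·Ω(w) = w(Ω(1))
    (fun v => w (v + ρ) - ρ) '' Ω w = (fun v => w v) '' Ω 1 :=
  dot_omega_eq_weyl_translate_omega_one_general P f hf Pos hPos ρ hρ N hN C Ω hΩ w hw
end
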